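/- arXiv:1510.03598 — 2 statements merged into one kernel-verified Lean document; each statement's English description precedes it below -/
import Mathlib

section
/- Let Γ be a finite connected self 2-distance graph with at least two vertices, having no 4-cycle subgraph, and not isomorphic to the cycle graph Cₙ for any odd n ≥ 5. Then the maximum degree of Γ equals 3. -/
open SimpleGraph

/-- The 2-distance graph of a graph `G`: two distinct vertices are adjacent
iff their distance in `G` equals `2`. -/
def twoDistGraph {V : Type*} (G : SimpleGraph V) : SimpleGraph V where
  Adj u v := G.dist u v = 2
  symm := by
    constructor
    intro u v h
    show G.dist v u = 2
    rwa [SimpleGraph.dist_comm]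
  loopless := by
    constructor
    intro v h
    show False
    simp [SimpleGraph.dist_self] at h

/-- `G` has an `n`-cycle subgraph: `n` distinct vertices `v 0, …, v (n-1)` with
`v i` adjacent to `v (i+1 mod n)` for all `i`. -/
def HasNCycle {V : Type*} (G : SimpleGraph V) (n : ℕ) : Prop :=
  ∃ v : ZMod n → V, Function.Injective v ∧ ∀ i, G.Adj (v i) (v (i + 1))

/-- The edged product `C₅|C₃`: a pentagon and a triangle glued along an edge. -/
def C5C3 : SimpleGraph (Fin 6) :=
  SimpleGraph.fromEdgeSet {s(0,1), s(1,2), s(2,3), s(3,4), s(4,5), s(5,0), s(1,5)}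

/-!
Since `G` has no 4-cycle, two distinct vertices have at most one common neighbour, so each
neighbour of a vertex `v` is adjacent to at most one other neighbour of `v`. If `v` had four
neighbours, the edges among them would therefore lie inside one of the three ways of pairing
them up; the two other pairings then form a 4-cycle of non-adjacent neighbours of `v`, i.e. a
4-cycle of `twoDistGraph G ≃g G`. Hence every degree is at most `3`.

If every degree were at most `2`, a longest path of the connected graph `G` would pass through
every vertex, so `G` would be a path or a cycle. Paths and even cycles are 2-coloured, and a
2-colouring is constant along the edges of the 2-distance graph, which is then disconnected; the
triangle has an edgeless 2-distance graph; odd cycles of length at least `5` are excluded.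
-/

namespace SimpleGraph

variable {V : Type*} {G : SimpleGraph V} {u v : V}

theorem cycleGraph_adj_iff_val {n : ℕ} (hn : 2 ≤ n) {i j : Fin n} :
    (cycleGraph n).Adj i j ↔ i.val + 1 = j.val ∨ j.val + 1 = i.val ∨
      i.val = 0 ∧ j.val = n - 1 ∨ i.val = n - 1 ∧ j.val = 0 := by
  obtain ⟨m, rfl⟩ : ∃ m, n = m + 2 := ⟨n - 2, by omega⟩
  have := i.isLt
  have := j.isLt
  rw [cycleGraph_adj']
  rcases lt_trichotomy i j with h | rfl | h
  · rw [Fin.coe_sub_iff_lt.mpr h, Fin.coe_sub_iff_le.mpr h.le]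
    rw [Fin.lt_def] at h
    omega
  · rw [sub_self, Fin.val_zero]
    omega
  · rw [Fin.coe_sub_iff_le.mpr h.le, Fin.coe_sub_iff_lt.mpr h]
    rw [Fin.lt_def] at h
    omega

theorem twoDistGraph_adj_iff :
    (twoDistGraph G).Adj u v ↔ u ≠ v ∧ ¬G.Adj u v ∧ (G.commonNeighbors u v).Nonempty := by
  rw [← edist_eq_two_iff]
  exact ENat.toNat_eq_iff two_ne_zero

theorem twoDistGraph_adj_of_adj_of_adj {x y : V} (hx : G.Adj v x) (hy : G.Adj v y)
    (hxy : x ≠ y) (hn : ¬G.Adj x y) : (twoDistGraph G).Adj x y :=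
  twoDistGraph_adj_iff.mpr ⟨hxy, hn, v, G.mem_commonNeighbors.mpr ⟨hx.symm, hy.symm⟩⟩

theorem twoDistGraph_eq_bot_of_pairwise_adj (h : Pairwise G.Adj) : twoDistGraph G = ⊥ := by
  ext x y
  simp only [bot_adj, iff_false]
  intro hxy
  obtain ⟨hne, hnadj, -⟩ := twoDistGraph_adj_iff.mp hxy
  exact hnadj (h hne)

theorem not_connected_twoDistGraph_of_coloring (c : G.Coloring Bool) (huv : G.Adj u v) :
    ¬(twoDistGraph G).Connected := by
  have hsame : ∀ x y, (twoDistGraph G).Adj x y → c x = c y := by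
    intro x y hxy
    obtain ⟨m, hm⟩ := (twoDistGraph_adj_iff.mp hxy).2.2
    rw [mem_commonNeighbors] at hm
    rw [Bool.eq_not_of_ne (c.valid hm.1), Bool.eq_not_of_ne (c.valid hm.2)]
  intro hconn
  obtain ⟨w⟩ := hconn u v
  refine c.valid huv ?_
  clear huv
  induction w with
  | nil => rfl
  | cons h _ ih => exact (hsame _ _ h).trans ih

theorem HasNCycle.map {W : Type*} {H : SimpleGraph W} {n : ℕ} (f : G →g H)
    (hf : Function.Injective f) (h : HasNCycle G n) : HasNCycle H n := by
  obtain ⟨c, hinj, hadj⟩ := h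
  exact ⟨f ∘ c, hf.comp hinj, fun i => f.map_adj (hadj i)⟩

theorem hasNCycle_four {a b c d : V} (hab : G.Adj a b) (hbc : G.Adj b c) (hcd : G.Adj c d)
    (hda : G.Adj d a) (hac : a ≠ c) (hbd : b ≠ d) : HasNCycle G 4 := by
  have := hab.ne
  have := hbc.ne
  have := hcd.ne
  have := hda.ne
  refine ⟨![a, b, c, d], ?_, ?_⟩
  · intro i j hij
    fin_cases i <;> fin_cases j <;> simp_all <;> rfl
  · intro i
    fin_cases i
    exacts [hab, hbc, hcd, hda]

theorem eq_of_adj_of_adj_of_not_hasNCycle_four (h4 : ¬HasNCycle G 4) {x y z : V} (hvx : v ≠ x)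
    (hvy : G.Adj v y) (hvz : G.Adj v z) (hxy : G.Adj x y) (hxz : G.Adj x z) : y = z := by
  by_contra hyz
  exact h4 (hasNCycle_four hvy hxy.symm hxz hvz.symm hvx hyz)

theorem degree_le_three_of_not_hasNCycle_four [Fintype V] [DecidableRel G.Adj]
    (h4 : ¬HasNCycle G 4) (h4₂ : ¬HasNCycle (twoDistGraph G) 4) (v : V) : G.degree v ≤ 3 := by
  classical
  by_contra! hdeg
  rw [← card_neighborFinset_eq_degree] at hdeg
  obtain ⟨a, ha, b, hb, c, hc, d, hd, hab, hac, had, hbc, hbd, hcd⟩ := Finset.three_lt_card.mp hdeg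
  simp only [mem_neighborFinset] at ha hb hc hd
  have unique {x y z : V} (hx : G.Adj v x) (hy : G.Adj v y) (hz : G.Adj v z) :
      G.Adj x y → G.Adj x z → y = z :=
    eq_of_adj_of_adj_of_not_hasNCycle_four h4 hx.ne hy hz
  have cycle {p q r s : V} (hp : G.Adj v p) (hq : G.Adj v q) (hr : G.Adj v r) (hs : G.Adj v s)
      (hpq : p ≠ q) (hrs : r ≠ s) (hpr : p ≠ r) (hps : p ≠ s) (hqr : q ≠ r) (hqs : q ≠ s)
      (hpr' : ¬G.Adj p r) (hps' : ¬G.Adj p s) (hqr' : ¬G.Adj q r) (hqs' : ¬G.Adj q s) : False :=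
    h4₂ (hasNCycle_four (twoDistGraph_adj_of_adj_of_adj hp hr hpr hpr')
      (twoDistGraph_adj_of_adj_of_adj hr hq hqr.symm (fun h => hqr' h.symm))
      (twoDistGraph_adj_of_adj_of_adj hq hs hqs hqs')
      (twoDistGraph_adj_of_adj_of_adj hs hp hps.symm (fun h => hps' h.symm)) hpq hrs)
  -- By `unique` the edges among `a, b, c, d` form a matching, so `cycle` applies to one of the
  -- three ways of pairing them up.
  grind [G.adj_comm]

def Walk.IsLongestPath (p : G.Walk u v) : Prop :=
  p.IsPath ∧ ∀ (x y : V) (q : G.Walk x y), q.IsPath → q.length ≤ p.length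

theorem exists_isLongestPath [Finite V] [Nonempty V] :
    ∃ (u v : V) (p : G.Walk u v), p.IsLongestPath := by
  classical
  have := Fintype.ofFinite V
  obtain ⟨x⟩ := ‹Nonempty V›
  have : Nonempty (Σ x : V × V, G.Path x.1 x.2) := ⟨⟨(x, x), Path.nil⟩⟩
  obtain ⟨⟨⟨u, v⟩, p⟩, hp⟩ :=
    Finite.exists_max fun q : Σ x : V × V, G.Path x.1 x.2 => q.2.1.length
  exact ⟨u, v, p, p.2, fun x y q hq => hp ⟨(x, y), ⟨q, hq⟩⟩⟩

section Finite

variable [Fintype V] [DecidableRel G.Adj]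

theorem eq_or_eq_of_degree_le_two (hv : G.degree v ≤ 2) {a b c : V} (ha : G.Adj v a)
    (hb : G.Adj v b) (hab : a ≠ b) (hc : G.Adj v c) : c = a ∨ c = b := by
  classical
  by_contra! h
  have hsub : ({a, b, c} : Finset V) ⊆ G.neighborFinset v := by
    simp [Finset.insert_subset_iff, ha, hb, hc]
  have := Finset.card_le_card hsub
  rw [Finset.card_eq_three.mpr ⟨a, b, c, hab, h.1.symm, h.2.symm, rfl⟩,
    card_neighborFinset_eq_degree] at this
  omega

variable {p : G.Walk u v}

theorem Walk.IsPath.eq_getVert_pred_or_succ (hp : p.IsPath) {i : ℕ} {w : V}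
    (hdeg : G.degree (p.getVert i) ≤ 2) (h0 : 0 < i) (hi : i < p.length)
    (hw : G.Adj (p.getVert i) w) : w = p.getVert (i - 1) ∨ w = p.getVert (i + 1) := by
  have hpred : G.Adj (p.getVert i) (p.getVert (i - 1)) := by
    have := p.adj_getVert_succ (i := i - 1) (by omega)
    rwa [Nat.sub_add_cancel h0, adj_comm] at this
  refine eq_or_eq_of_degree_le_two hdeg hpred (p.adj_getVert_succ hi) (fun h => ?_) hw
  have := hp.getVert_injOn (by simp; omega) (by simp; omega) h
  omega

theorem Walk.IsPath.adj_getVert_iff (hp : p.IsPath) (hdeg : ∀ w, G.degree w ≤ 2) {i j : ℕ}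
    (hi : i ≤ p.length) (hj : j ≤ p.length) :
    G.Adj (p.getVert i) (p.getVert j) ↔ i + 1 = j ∨ j + 1 = i ∨
      G.Adj u v ∧ (i = 0 ∧ j = p.length ∨ i = p.length ∧ j = 0) := by
  constructor
  · intro h
    have hij : i ≠ j := fun hij => h.ne (congrArg p.getVert hij)
    by_cases hi' : 0 < i ∧ i < p.length
    · rcases hp.eq_getVert_pred_or_succ (hdeg _) hi'.1 hi'.2 h with e | e
      all_goals have := hp.getVert_injOn hj (by simp; omega) e; omega
    by_cases hj' : 0 < j ∧ j < p.length
    · rcases hp.eq_getVert_pred_or_succ (hdeg _) hj'.1 hj'.2 h.symm with e | e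
      all_goals have := hp.getVert_injOn hi (by simp; omega) e; omega
    obtain ⟨rfl, rfl⟩ | ⟨rfl, rfl⟩ : i = 0 ∧ j = p.length ∨ i = p.length ∧ j = 0 := by omega
    · simp only [getVert_zero, getVert_length] at h
      exact .inr (.inr ⟨h, .inl ⟨rfl, rfl⟩⟩)
    · simp only [getVert_zero, getVert_length] at h
      exact .inr (.inr ⟨h.symm, .inr ⟨rfl, rfl⟩⟩)
  · rintro (rfl | rfl | ⟨huv, ⟨rfl, rfl⟩ | ⟨rfl, rfl⟩⟩)
    · exact p.adj_getVert_succ (by omega)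
    · exact (p.adj_getVert_succ (by omega)).symm
    · simpa using huv
    · simpa using huv.symm

theorem Walk.IsLongestPath.mem_support (hp : p.IsLongestPath) (hconn : G.Connected)
    (hdeg : ∀ w, G.degree w ≤ 2) (w : V) : w ∈ p.support := by
  by_contra hw
  obtain ⟨d, -, hd, hd'⟩ :=
    (hconn u w).some.exists_boundary_dart {x | x ∈ p.support} p.start_mem_support hw
  obtain ⟨i, hi, hil⟩ := mem_support_iff_exists_getVert.mp hd
  replace hd' : d.snd ∉ p.support := hd'
  have hadj : G.Adj d.snd (p.getVert i) := hi ▸ d.adj.symm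
  rcases Nat.eq_zero_or_pos i with rfl | h0
  · have := hp.2 _ _ _ (hp.1.cons (h := p.getVert_zero ▸ hadj) hd')
    simp at this
  rcases hil.eq_or_lt with rfl | hlt
  · have hrev : d.snd ∉ p.reverse.support := by simpa using hd'
    have := hp.2 _ _ _ (hp.1.reverse.cons (h := p.getVert_length ▸ hadj) hrev)
    simp at this
  rcases hp.1.eq_getVert_pred_or_succ (hdeg _) h0 hlt hadj.symm with h | h <;>
    exact hd' (h ▸ getVert_mem_support _ _)

theorem Connected.nonempty_iso_pathGraph_or_cycleGraph (hconn : G.Connected)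
    (hdeg : ∀ w, G.degree w ≤ 2) :
    ∃ n, Nonempty (G ≃g pathGraph n) ∨ Nonempty (G ≃g cycleGraph n) := by
  have := hconn.nonempty
  obtain ⟨u, v, p, hp⟩ := G.exists_isLongestPath
  let f : Fin (p.length + 1) → V := fun i => p.getVert i
  have hf : f.Bijective := by
    refine ⟨fun i j h => Fin.ext (hp.1.getVert_injOn (by simp; omega) (by simp; omega) h),
      fun w => ?_⟩
    obtain ⟨i, hi, hil⟩ := Walk.mem_support_iff_exists_getVert.mp (hp.mem_support hconn hdeg w)
    exact ⟨⟨i, by omega⟩, hi⟩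
  have hadj (i j : Fin (p.length + 1)) :=
    hp.1.adj_getVert_iff hdeg (i := i) (j := j) (by omega) (by omega)
  refine ⟨p.length + 1, ?_⟩
  by_cases huv : G.Adj u v
  · have hlen : 1 ≤ p.length :=
      Nat.pos_of_ne_zero fun h => huv.ne (by simpa [h] using p.getVert_length)
    refine .inr ⟨(⟨Equiv.ofBijective f hf, fun {i j} => ?_⟩ : cycleGraph _ ≃g G).symm⟩
    rw [Equiv.ofBijective_apply, Equiv.ofBijective_apply, hadj, cycleGraph_adj_iff_val (by omega)]
    simp only [huv, true_and, Nat.add_sub_cancel]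
  · refine .inl ⟨(⟨Equiv.ofBijective f hf, fun {i j} => ?_⟩ : pathGraph _ ≃g G).symm⟩
    rw [Equiv.ofBijective_apply, Equiv.ofBijective_apply, hadj, pathGraph_adj]
    simp only [huv, false_and, or_false]

theorem exists_three_le_degree [Nontrivial V] (hconn : G.Connected)
    (hconn₂ : (twoDistGraph G).Connected)
    (hcyc : ∀ n : ℕ, 5 ≤ n → Odd n → IsEmpty (G ≃g cycleGraph n)) :
    ∃ v, 3 ≤ G.degree v := by
  by_contra! hdeg
  obtain ⟨x, y, hxy⟩ : ∃ x y, G.Adj x y :=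
    ⟨_, hconn.preconnected.exists_adj_of_nontrivial (Classical.arbitrary V)⟩
  obtain ⟨n, ⟨⟨e⟩⟩ | ⟨⟨e⟩⟩⟩ :=
    hconn.nonempty_iso_pathGraph_or_cycleGraph fun v => Nat.le_of_lt_succ (hdeg v)
  · exact not_connected_twoDistGraph_of_coloring ((pathGraph.bicoloring n).comp e.toHom) hxy
      hconn₂
  rcases Nat.even_or_odd n with heven | hodd
  · exact not_connected_twoDistGraph_of_coloring
      ((cycleGraph.bicoloring_of_even n heven).comp e.toHom) hxy hconn₂
  have hn : 2 ≤ n := by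
    have := Fintype.card_congr e.toEquiv
    rw [Fintype.card_fin] at this
    have := Fintype.one_lt_card_iff_nontrivial.mpr ‹_›
    omega
  obtain rfl | hn5 : n = 3 ∨ 5 ≤ n := by
    obtain ⟨k, rfl⟩ := hodd
    omega
  · refine not_connected_bot (twoDistGraph_eq_bot_of_pairwise_adj (fun a b hab => ?_) ▸ hconn₂)
    have htriangle : ∀ i j : Fin 3, i ≠ j → (cycleGraph 3).Adj i j := by decide
    exact e.map_adj_iff.mp (htriangle _ _ (e.injective.ne hab))
  · exact (hcyc n hn5 hodd).false e

end Finite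

end SimpleGraph

/-- A connected self 2-distance graph with no 4-cycle subgraph which is not an
odd cycle of length ≥ 5 has maximum degree 3. -/
theorem maxDegree_eq_three_of_c4Free {V : Type*} [Fintype V] (G : SimpleGraph V)
    [DecidableRel G.Adj]
    (hconn : G.Connected) (hcard : 1 < Fintype.card V)
    (hself : Nonempty (twoDistGraph G ≃g G))
    (h4 : ¬ HasNCycle G 4)
    (hcyc : ∀ n : ℕ, 5 ≤ n → Odd n → IsEmpty (G ≃g cycleGraph n)) :
    G.maxDegree = 3 := by
  obtain ⟨e⟩ := hself
  have : Nontrivial V := Fintype.one_lt_card_iff_nontrivial.mp hcard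
  have hle : ∀ v, G.degree v ≤ 3 :=
    degree_le_three_of_not_hasNCycle_four h4 fun h => h4 (h.map e.toHom e.injective)
  obtain ⟨v, hv⟩ := exists_three_le_degree hconn (e.connected_iff.mpr hconn) hcyc
  exact le_antisymm (G.maxDegree_le_of_forall_degree_le 3 hle) (hv.trans (G.degree_le_maxDegree v))
end

section
/- There is no cubic self 2-distance graph: no finite connected simple graph Γ that is regular of degree 3 satisfies Γ₂ ≅ Γ. -/
open SimpleGraph

/-
If `Γ₂ ≅ Γ` then `Γ₂` is cubic as well, so every vertex has exactly three vertices at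
distance 2.

If `Γ` were triangle-free, the three neighbours of any vertex would be pairwise at distance 2, so
`Γ₂ ≅ Γ` would contain a triangle. Hence `Γ` has a triangle `uvw`; let `a, b, c` be the third
neighbours of `u, v, w`. Counting the vertices at distance 2 from `u` shows first that `a ≠ b`
(otherwise at most two remain), and then that `a` is adjacent to exactly one of `b, c` (the
distance-2 vertices are `b, c` and the two further neighbours of `a`). By symmetry the same holds
for `b` and `c`, so the graph induced on `{a, b, c}` would be 1-regular on three vertices.
-/

theorem Set.xor_eq_or_eq_of_ncard_eq_three {α : Type*} {b c p q : α}
    (h : ({b, c, p, q} : Set α).ncard = 3) (hbc : b ≠ c) (hpq : p ≠ q) :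
    Xor (b = p ∨ b = q) (c = p ∨ c = q) := by
  by_cases hb : b = p ∨ b = q <;> by_cases hc : c = p ∨ c = q
  · rcases hb with rfl | rfl <;> rcases hc with rfl | rfl <;> simp_all
  · simp [hb, hc]
  · simp [hb, hc]
  · push Not at hb hc
    rw [Set.ncard_insert_of_notMem (by simp [hbc, hb.1, hb.2]),
      Set.ncard_insert_of_notMem (by simp [hc.1, hc.2]), Set.ncard_pair hpq] at h
    omega

namespace SimpleGraph

variable {V : Type*} {G : SimpleGraph V} {u v w a b c : V}

theorem dist_eq_two_iff :
    G.dist u w = 2 ↔ u ≠ w ∧ ¬G.Adj u w ∧ ∃ x, G.Adj u x ∧ G.Adj x w := by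
  simp [SimpleGraph.dist, edist_eq_two_iff, Set.Nonempty, mem_commonNeighbors, adj_comm]

theorem Iso.ncard_neighborSet_eq_degree {W : Type*} {H : SimpleGraph W} [H.LocallyFinite]
    (e : G ≃g H) (v : V) : (G.neighborSet v).ncard = H.degree (e v) := by
  rw [← Nat.card_coe_set_eq, Nat.card_congr (e.mapNeighborSet v), Nat.card_eq_fintype_card,
    card_neighborSet_eq_degree]

theorem IsRegularOfDegree.exists_adj_iff_of_adj [G.LocallyFinite] (hG : G.IsRegularOfDegree 3)
    (hv : G.Adj u v) :
    ∃ p q, p ≠ q ∧ p ≠ v ∧ q ≠ v ∧ ∀ z, G.Adj u z ↔ z = v ∨ z = p ∨ z = q := by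
  classical
  have hcard : ((G.neighborFinset u).erase v).card = 2 := by
    rw [Finset.card_erase_of_mem ((G.mem_neighborFinset u v).mpr hv), card_neighborFinset_eq_degree,
      hG.degree_eq]
  obtain ⟨p, q, hpq, hs⟩ := Finset.card_eq_two.mp hcard
  have hmem (z : V) : z ≠ v ∧ G.Adj u z ↔ z = p ∨ z = q := by
    simpa using Finset.ext_iff.mp hs z
  refine ⟨p, q, hpq, ((hmem p).mpr (.inl rfl)).1, ((hmem q).mpr (.inr rfl)).1, fun z => ?_⟩
  grind

theorem IsRegularOfDegree.exists_adj_iff_of_adj_of_adj [G.LocallyFinite]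
    (hG : G.IsRegularOfDegree 3) (hv : G.Adj u v) (hw : G.Adj u w) (hvw : v ≠ w) :
    ∃ a, a ≠ v ∧ a ≠ w ∧ ∀ z, G.Adj u z ↔ z = v ∨ z = w ∨ z = a := by
  obtain ⟨p, q, hpq, hpv, hqv, hu⟩ := hG.exists_adj_iff_of_adj hv
  rcases (hu w).mp hw with rfl | rfl | rfl
  · exact absurd rfl hvw
  · exact ⟨q, hqv, hpq.symm, hu⟩
  · exact ⟨p, hpv, hpq, fun z => by grind⟩

theorem twoDistGraph_adj :
    (twoDistGraph G).Adj u w ↔ u ≠ w ∧ ¬G.Adj u w ∧ ∃ x, G.Adj u x ∧ G.Adj x w :=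
  dist_eq_two_iff

theorem isClique_twoDistGraph_neighborSet (h : G.CliqueFree 3) (v : V) :
    (twoDistGraph G).IsClique (G.neighborSet v) := by
  classical
  intro x hx y hy hxy
  exact twoDistGraph_adj.mpr
    ⟨hxy, fun hxy' => h _ (is3Clique_triple_iff.mpr ⟨hx, hy, hxy'⟩), v, G.adj_symm hx, hy⟩

theorem not_cliqueFree_three_twoDistGraph [G.LocallyFinite] (h : G.CliqueFree 3)
    (hv : 3 ≤ G.degree v) : ¬(twoDistGraph G).CliqueFree 3 := by
  obtain ⟨t, ht, hcard⟩ := Finset.exists_subset_card_eq hv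
  have hsub : (t : Set V) ⊆ G.neighborSet v := fun x hx => (G.mem_neighborFinset v x).mp (ht hx)
  exact fun hfree => hfree t ⟨(isClique_twoDistGraph_neighborSet h v).subset hsub, hcard⟩

-- Neighbours are listed cyclically, so that `rotate` is a relabelling of the triangle.
structure IsTriangleWithThirdNeighbors (G : SimpleGraph V) (u v w a b c : V) : Prop where
  adj_fst : ∀ z, G.Adj u z ↔ z = v ∨ z = w ∨ z = a
  adj_snd : ∀ z, G.Adj v z ↔ z = w ∨ z = u ∨ z = b
  adj_thd : ∀ z, G.Adj w z ↔ z = u ∨ z = v ∨ z = c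
  fst_ne : a ≠ v ∧ a ≠ w
  snd_ne : b ≠ w ∧ b ≠ u
  thd_ne : c ≠ u ∧ c ≠ v

namespace IsTriangleWithThirdNeighbors

theorem rotate (h : G.IsTriangleWithThirdNeighbors u v w a b c) :
    G.IsTriangleWithThirdNeighbors v w u b c a :=
  ⟨h.adj_snd, h.adj_thd, h.adj_fst, h.snd_ne, h.thd_ne, h.fst_ne⟩

theorem fst_ne_snd [G.LocallyFinite] (hG : G.IsRegularOfDegree 3)
    (hu : 2 < ((twoDistGraph G).neighborSet u).ncard)
    (h : G.IsTriangleWithThirdNeighbors u v w a b c) : a ≠ b := by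
  rintro rfl
  have hua : G.Adj u a := (h.adj_fst a).mpr (by simp)
  have hva : G.Adj v a := (h.adj_snd a).mpr (by simp)
  obtain ⟨t, -, -, hat⟩ := hG.exists_adj_iff_of_adj_of_adj hua.symm hva.symm
    ((h.adj_fst v).mpr (by simp)).ne
  have hsub : (twoDistGraph G).neighborSet u ⊆ {c, t} := by
    intro y hy
    obtain ⟨hyu, hny, x, hux, hxy⟩ := twoDistGraph_adj.mp hy
    grind [h.adj_fst, h.adj_snd, h.adj_thd]
  have hct : ({c, t} : Set V).ncard ≤ 2 := (Set.ncard_insert_le c {t}).trans (by simp)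
  exact ((Set.ncard_le_ncard hsub).trans hct).not_gt hu

theorem xor_adj [G.LocallyFinite] (hG : G.IsRegularOfDegree 3)
    (hu : ((twoDistGraph G).neighborSet u).ncard = 3)
    (h : G.IsTriangleWithThirdNeighbors u v w a b c) (hab : a ≠ b) (hbc : b ≠ c) (hca : c ≠ a) :
    Xor (G.Adj a b) (G.Adj a c) := by
  have hua : G.Adj u a := (h.adj_fst a).mpr (by simp)
  obtain ⟨p, q, hpq, hpu, hqu, hap⟩ := hG.exists_adj_iff_of_adj hua.symm
  have hav : ¬G.Adj a v := fun hav => by grind [(h.adj_snd a).mp hav.symm, hua.ne', h.fst_ne]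
  have haw : ¬G.Adj a w := fun haw => by grind [(h.adj_thd a).mp haw.symm, hua.ne', h.fst_ne]
  have hS : (twoDistGraph G).neighborSet u = {b, c, p, q} := by
    ext y
    rw [mem_neighborSet, twoDistGraph_adj]
    simp only [Set.mem_insert_iff, Set.mem_singleton_iff]
    have hvb : G.Adj v b := (h.adj_snd b).mpr (by simp)
    have hwc : G.Adj w c := (h.adj_thd c).mpr (by simp)
    have hp : G.Adj a p := (hap p).mpr (by simp)
    have hq : G.Adj a q := (hap q).mpr (by simp)
    grind [h.adj_fst, h.adj_snd, h.adj_thd, h.fst_ne, h.snd_ne, h.thd_ne, SimpleGraph.irrefl]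
  rw [hS] at hu
  rw [hap b, hap c]
  have := Set.xor_eq_or_eq_of_ncard_eq_three hu hbc hpq
  grind [h.snd_ne, h.thd_ne]

end IsTriangleWithThirdNeighbors

theorem IsRegularOfDegree.cliqueFree_three_of_ncard_twoDistGraph [G.LocallyFinite]
    (hG : G.IsRegularOfDegree 3) (h2 : ∀ u, ((twoDistGraph G).neighborSet u).ncard = 3) :
    G.CliqueFree 3 := by
  classical
  intro s hs
  obtain ⟨u, v, w, huv, huw, hvw, rfl⟩ := is3Clique_iff.mp hs
  obtain ⟨a, hav, haw, hu⟩ := hG.exists_adj_iff_of_adj_of_adj huv huw hvw.ne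
  obtain ⟨b, hbw, hbu, hv⟩ := hG.exists_adj_iff_of_adj_of_adj hvw huv.symm huw.ne'
  obtain ⟨c, hcu, hcv, hw⟩ := hG.exists_adj_iff_of_adj_of_adj huw.symm hvw.symm huv.ne
  have h : G.IsTriangleWithThirdNeighbors u v w a b c :=
    ⟨hu, hv, hw, ⟨hav, haw⟩, ⟨hbw, hbu⟩, ⟨hcu, hcv⟩⟩
  have h2' (x : V) : 2 < ((twoDistGraph G).neighborSet x).ncard := by simp [h2]
  have hab := h.fst_ne_snd hG (h2' u)
  have hbc := h.rotate.fst_ne_snd hG (h2' v)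
  have hca := h.rotate.rotate.fst_ne_snd hG (h2' w)
  have xa := h.xor_adj hG (h2 u) hab hbc hca
  have xb := h.rotate.xor_adj hG (h2 v) hbc hca hab
  have xc := h.rotate.rotate.xor_adj hG (h2 w) hca hab hbc
  rw [G.adj_comm b a, G.adj_comm c a, G.adj_comm c b] at *
  grind

end SimpleGraph

/-- There is no cubic self 2-distance graph. -/
theorem no_cubic_selfTwoDist {V : Type*} [Fintype V] (G : SimpleGraph V)
    [DecidableRel G.Adj]
    (hconn : G.Connected) (hcubic : ∀ v : V, G.degree v = 3) :
    IsEmpty (twoDistGraph G ≃g G) := by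
  refine ⟨fun e => ?_⟩
  have hfree : G.CliqueFree 3 := IsRegularOfDegree.cliqueFree_three_of_ncard_twoDistGraph hcubic
    fun u => (e.ncard_neighborSet_eq_degree u).trans (hcubic (e u))
  obtain ⟨v⟩ := hconn.nonempty
  exact not_cliqueFree_three_twoDistGraph hfree (hcubic v).ge (hfree.comap e.isContained)
end
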